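/- arXiv:2209.12755 — 2 statements merged into one kernel-verified Lean document; each statement's English description precedes it below -/
import Mathlib

section
/- Let N ≥ 2 and T ≥ 1, set P = N+T and L = NP, let I ⊆ Z_P with |I| = T, and write Z_P \ I = {l_0 < l_1 < … < l_{N-1}}. Let g : Z_N → Z_N be any permutation. Define the frequency-domain sequence Û of length L by û_{Pr+l_t} = √(P/N)·ω_N^{r·g(t)}·ω_{NP}^{l_t·g(t)} for 0 ≤ r < N and 0 ≤ t < N, and û_{Pr+s} = 0 for s ∈ I. Let U be the inverse unitary DFT of Û. Then the periodic autocorrelation of U satisfies: θ_U(0) = NP; |θ_U(τ)| = |P·Σ_{l ∈ Z_P \ I} ω_P^{l·b}| whenever τ = N·b with 0 < τ < L and P not dividing b; and θ_U(τ) = 0 for all other τ with 0 < τ < L. -/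
/-- Periodic cross-correlation of two length-`L` complex sequences. -/
noncomputable def pcc (L : ℕ) (c d : ℕ → ℂ) (τ : ℕ) : ℂ :=
  ∑ t ∈ Finset.range L, c t * (starRingEnd ℂ) (d ((t + τ) % L))

/-- Inverse unitary DFT of a length-`L` complex sequence. -/
noncomputable def iudft (L : ℕ) (chat : ℕ → ℂ) (t : ℕ) : ℂ :=
  ((Real.sqrt L : ℝ) : ℂ)⁻¹ * ∑ n ∈ Finset.range L,
    chat n * Complex.exp (2 * (Real.pi : ℂ) * Complex.I * (n : ℂ) * (t : ℂ) / (L : ℂ))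

/-- The frequency-domain sequence of Construction 3: writing `n = P·r + s`
(`r = n/P`, `s = n%P`), `û_{Pr+l_t} = √(P/N)·ω_N^{r·g(t)}·ω_{NP}^{l_t·g(t)}` for the
increasing enumeration `l` of the admissible carriers, and `û_{Pr+s} = 0` for
forbidden `s ∈ I` (no `t` matches, so the sum below is empty). -/
noncomputable def uhatG (N P : ℕ) (l g : Fin N → ℕ) (n : ℕ) : ℂ :=
  ∑ t : Fin N,
    if l t = n % P then
      (Real.sqrt ((P : ℝ) / (N : ℝ)) : ℂ) *
        Complex.exp (2 * (Real.pi : ℂ) * Complex.I *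
          (((n / P) * g t : ℕ) : ℂ) / (N : ℂ)) *
        Complex.exp (2 * (Real.pi : ℂ) * Complex.I *
          ((l t * g t : ℕ) : ℂ) / ((N * P : ℕ) : ℂ))
    else 0

section Aux
open Complex Finset

noncomputable def EE (x : ℝ) : ℂ := Complex.exp (2 * Real.pi * Complex.I * x)

lemma EE_add (x y : ℝ) : EE (x + y) = EE x * EE y := by
  rw [EE, EE, EE, ← Complex.exp_add]; push_cast; ring_nf

lemma EE_int (k : ℤ) : EE k = 1 := by
  rw [EE, show (2 * (Real.pi:ℂ) * Complex.I * ((k:ℝ):ℂ)) = (k:ℂ) * (2*(Real.pi:ℂ)*Complex.I) by push_cast; ring, Complex.exp_int_mul_two_pi_mul_I]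

lemma EE_zero : EE 0 = 1 := by simpa using EE_int 0

lemma conj_EE (x : ℝ) : (starRingEnd ℂ) (EE x) = EE (-x) := by
  rw [EE, EE, ← Complex.exp_conj]
  congr 1
  have : (starRingEnd ℂ) (2 * (Real.pi:ℂ) * Complex.I * (x:ℂ)) =
      2 * (Real.pi:ℂ) * (-Complex.I) * (x:ℂ) := by
    simp [map_mul, map_ofNat, Complex.conj_I, Complex.conj_ofReal]
  rw [this]; push_cast; ring

lemma EE_pow (x : ℝ) (t : ℕ) : EE (x * t) = (EE x)^t := by
  rw [EE, EE, ← Complex.exp_nat_mul]; congr 1; push_cast; ring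

lemma EE_eq_one_iff (k : ℤ) (L : ℕ) (hL : 0 < L) : EE ((k:ℝ) / L) = 1 ↔ (L:ℤ) ∣ k := by
  have hL' : (L:ℂ) ≠ 0 := by exact_mod_cast Nat.cast_ne_zero.mpr hL.ne'
  rw [EE, Complex.exp_eq_one_iff]
  constructor
  · rintro ⟨n, hn⟩
    have h2 : (2*(Real.pi:ℂ)*Complex.I) ≠ 0 := by
      simp [Real.pi_ne_zero, Complex.I_ne_zero]
    have h3 : (2*(Real.pi:ℂ)*Complex.I) * ((k:ℂ)/(L:ℂ)) = (2*(Real.pi:ℂ)*Complex.I) * (n:ℂ) := by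
      push_cast at hn ⊢
      linear_combination hn
    have h4 : (k:ℂ)/(L:ℂ) = (n:ℂ) := mul_left_cancel₀ h2 h3
    have h5 : (k:ℂ) = (n:ℂ) * L := (div_eq_iff hL').mp h4
    exact ⟨n, by exact_mod_cast h5.trans (mul_comm _ _)⟩
  · rintro ⟨n, rfl⟩
    refine ⟨n, ?_⟩
    push_cast
    field_simp

lemma orth (L : ℕ) (hL : 0 < L) (k : ℤ) :
    ∑ t ∈ Finset.range L, EE ((k:ℝ) * t / L) = if (L:ℤ) ∣ k then (L:ℂ) else 0 := by
  have hz : ∀ t : ℕ, EE ((k:ℝ) * t / L) = (EE ((k:ℝ)/L))^t := by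
    intro t
    rw [← EE_pow]
    congr 1
    ring
  by_cases h : (L:ℤ) ∣ k
  · rw [if_pos h]
    have h1 : EE ((k:ℝ)/L) = 1 := (EE_eq_one_iff k L hL).mpr h
    simp [hz, h1]
  · rw [if_neg h]
    have h1 : EE ((k:ℝ)/L) ≠ 1 := fun hc => h ((EE_eq_one_iff k L hL).mp hc)
    have hLpow : (EE ((k:ℝ)/L))^L = 1 := by
      rw [← EE_pow]
      have : (k:ℝ)/L * L = (k:ℝ) := by
        field_simp
      rw [this]
      exact_mod_cast EE_int k
    simp only [hz]
    rw [geom_sum_eq h1, hLpow]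
    simp

lemma conj_EE_div (a L : ℝ) : (starRingEnd ℂ) (EE (a / L)) = EE (-a / L) := by
  rw [conj_EE, neg_div]

lemma EE_neg_mod (L : ℕ) (hL : 0 < L) (m x : ℕ) :
    EE (-((m * (x % L) : ℕ):ℝ)/L) = EE (-((m * x : ℕ):ℝ)/L) := by
  have hLR : (L:ℝ) ≠ 0 := Nat.cast_ne_zero.mpr hL.ne'
  conv_rhs => rw [show x = x % L + L * (x / L) from (Nat.mod_add_div x L).symm]
  set s := x % L with hs
  set q := x / L with hq
  rw [show (-((m * (s + L * q) : ℕ):ℝ)/L) = (-((m * s : ℕ):ℝ)/L) + ((-(m * q : ℕ) : ℤ):ℝ) by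
    push_cast; field_simp; ring]
  rw [EE_add, EE_int, mul_one]

lemma iudft_eq (L : ℕ) (ch : ℕ → ℂ) (t : ℕ) :
    iudft L ch t = ((Real.sqrt L : ℝ) : ℂ)⁻¹ *
      ∑ n ∈ Finset.range L, ch n * EE (((n * t : ℕ):ℝ)/L) := by
  unfold iudft EE
  congr 1
  refine Finset.sum_congr rfl fun n _ => ?_
  congr 1
  push_cast
  ring

lemma pcc_iudft (L : ℕ) (hL : 0 < L) (ch : ℕ → ℂ) (τ : ℕ) :
    pcc L (iudft L ch) (iudft L ch) τ =
      ∑ n ∈ Finset.range L, ch n * (starRingEnd ℂ) (ch n) * EE (-((n * τ : ℕ):ℝ)/L) := by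
  have hLR : (L:ℝ) ≠ 0 := Nat.cast_ne_zero.mpr hL.ne'
  set c : ℂ := ((Real.sqrt L : ℝ) : ℂ)⁻¹ with hc
  have hconjc : (starRingEnd ℂ) c = c := by
    rw [hc, map_inv₀, Complex.conj_ofReal]
  have hcc : c * c * (L:ℂ) = 1 := by
    rw [hc]
    have h1 : Real.sqrt L * Real.sqrt L = (L:ℝ) := Real.mul_self_sqrt (by positivity)
    have h2 : Real.sqrt L ≠ 0 := by
      rw [Real.sqrt_ne_zero']
      exact_mod_cast hL
    rw [show ((Real.sqrt L : ℝ):ℂ)⁻¹ * ((Real.sqrt L : ℝ):ℂ)⁻¹ * (L:ℂ)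
        = (((Real.sqrt L)⁻¹ * (Real.sqrt L)⁻¹ * L : ℝ) : ℂ) by push_cast; ring]
    norm_cast
    rw [← h1]
    field_simp
    rw [Real.sqrt_sq (Real.sqrt_nonneg _)]
  have step1 : pcc L (iudft L ch) (iudft L ch) τ =
      ∑ t ∈ Finset.range L, ∑ n ∈ Finset.range L, ∑ m ∈ Finset.range L,
        c * c * (ch n * (starRingEnd ℂ) (ch m) *
          (EE (((n * t : ℕ):ℝ)/L) * EE (-((m * (t + τ) : ℕ):ℝ)/L))) := by
    unfold pcc
    refine Finset.sum_congr rfl fun t ht => ?_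
    rw [iudft_eq, iudft_eq, map_mul, hconjc, map_sum]
    have hconj : ∀ m ∈ Finset.range L,
        (starRingEnd ℂ) (ch m * EE (((m * ((t + τ) % L) : ℕ):ℝ)/L)) =
        (starRingEnd ℂ) (ch m) * EE (-((m * (t + τ) : ℕ):ℝ)/L) := by
      intro m _
      rw [map_mul, conj_EE_div, EE_neg_mod L hL m (t + τ)]
    rw [Finset.sum_congr rfl hconj]
    rw [show (c * ∑ n ∈ Finset.range L, ch n * EE (((n * t : ℕ):ℝ)/L)) *
        (c * ∑ m ∈ Finset.range L, (starRingEnd ℂ) (ch m) * EE (-((m * (t + τ) : ℕ):ℝ)/L))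
        = c * c * ((∑ n ∈ Finset.range L, ch n * EE (((n * t : ℕ):ℝ)/L)) *
          (∑ m ∈ Finset.range L, (starRingEnd ℂ) (ch m) * EE (-((m * (t + τ) : ℕ):ℝ)/L)))
        by ring]
    rw [Finset.sum_mul_sum]
    rw [Finset.mul_sum]
    refine Finset.sum_congr rfl fun n _ => ?_
    rw [Finset.mul_sum]
    refine Finset.sum_congr rfl fun m _ => ?_
    ring
  rw [step1, Finset.sum_comm]
  refine Finset.sum_congr rfl fun n hn => ?_
  have step2 : ∀ m ∈ Finset.range L,
      ∑ t ∈ Finset.range L, c * c * (ch n * (starRingEnd ℂ) (ch m) *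
        (EE (((n * t : ℕ):ℝ)/L) * EE (-((m * (t + τ) : ℕ):ℝ)/L)))
      = c * c * (ch n * (starRingEnd ℂ) (ch m) * EE (-((m * τ : ℕ):ℝ)/L) *
          (if (L:ℤ) ∣ ((n:ℤ) - m) then (L:ℂ) else 0)) := by
    intro m _
    rw [← orth L hL ((n:ℤ) - m), Finset.mul_sum, Finset.mul_sum]
    refine Finset.sum_congr rfl fun t _ => ?_
    rw [show EE (((n * t : ℕ):ℝ)/L) * EE (-((m * (t + τ) : ℕ):ℝ)/L)
        = EE (((n * t : ℕ):ℝ)/L + -((m * (t + τ) : ℕ):ℝ)/L) by rw [EE_add]]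
    rw [show (((n * t : ℕ):ℝ)/L + -((m * (t + τ) : ℕ):ℝ)/L)
        = (-((m * τ : ℕ):ℝ)/L + (((n:ℤ) - m : ℤ):ℝ) * t / L) by push_cast; ring]
    rw [EE_add]
    ring
  rw [Finset.sum_comm, Finset.sum_congr rfl step2]
  rw [Finset.sum_eq_single_of_mem n hn]
  · rw [if_pos (by simp)]
    linear_combination (ch n * (starRingEnd ℂ) (ch n) * EE (-((n * τ : ℕ):ℝ)/L)) * hcc
  · intro m hm hmn
    rw [if_neg, mul_zero, mul_zero]
    intro hdvd
    have h0 : (n:ℤ) - m ≠ 0 := by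
      intro h
      exact hmn (by omega)
    have h1 := Int.le_of_dvd (abs_pos.mpr h0) ((dvd_abs _ _).mpr hdvd)
    have hn' := Finset.mem_range.mp hn
    have hm' := Finset.mem_range.mp hm
    have habs : |(n:ℤ) - m| < L := abs_lt.mpr ⟨by omega, by omega⟩
    linarith

lemma uhatG_eq (N P : ℕ) (l gg : Fin N → ℕ) (n : ℕ) :
    uhatG N P l gg n = ∑ t : Fin N,
      if l t = n % P then
        ((Real.sqrt ((P : ℝ) / (N : ℝ)) : ℝ) : ℂ) *
          EE (((n / P * gg t : ℕ):ℝ) / N) * EE (((l t * gg t : ℕ):ℝ) / (N * P : ℕ)) else 0 := by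
  unfold uhatG
  refine Finset.sum_congr rfl fun t _ => ?_
  unfold EE
  congr 2
  · congr 1
    push_cast
    ring
  · congr 1
    push_cast
    ring

lemma uhat_mul_conj (N P : ℕ) (hN : 0 < N) (hP : 0 < P)
    (l : Fin N → ℕ) (hlinj : Function.Injective l) (gg : Fin N → ℕ) (n : ℕ) :
    uhatG N P l gg n * (starRingEnd ℂ) (uhatG N P l gg n) =
      ∑ t : Fin N, if l t = n % P then ((P:ℂ) / N) else 0 := by
  have hval : ∀ x y : ℝ,
      (((Real.sqrt ((P : ℝ) / (N : ℝ)) : ℝ) : ℂ) * EE x * EE y) *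
        (starRingEnd ℂ) (((Real.sqrt ((P : ℝ) / (N : ℝ)) : ℝ) : ℂ) * EE x * EE y) = (P:ℂ)/N := by
    intro x y
    rw [map_mul, map_mul, Complex.conj_ofReal, conj_EE, conj_EE]
    rw [show ((Real.sqrt ((P:ℝ)/N) : ℝ):ℂ) * EE x * EE y *
        (((Real.sqrt ((P:ℝ)/N) : ℝ):ℂ) * EE (-x) * EE (-y))
        = (((Real.sqrt ((P:ℝ)/N) * Real.sqrt ((P:ℝ)/N) : ℝ)):ℂ) * (EE x * EE (-x)) * (EE y * EE (-y)) by
      push_cast; ring]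
    rw [← EE_add, ← EE_add]
    simp only [add_neg_cancel, EE_zero, mul_one]
    rw [Real.mul_self_sqrt (by positivity)]
    push_cast
    ring
  rw [uhatG_eq, map_sum, Finset.sum_mul_sum]
  refine Finset.sum_congr rfl fun t _ => ?_
  by_cases h : l t = n % P
  · rw [Finset.sum_eq_single_of_mem t (Finset.mem_univ t)]
    · rw [if_pos h, if_pos h, hval]
    · intro s _ hst
      have hs : ¬ (l s = n % P) := fun hc => hst (hlinj (hc.trans h.symm))
      rw [if_neg hs, map_zero, mul_zero]
  · simp [if_neg h]

lemma sum_mod (N P : ℕ) (hP : 0 < P) (a : ℕ) (ha : a < P) (f : ℕ → ℂ) :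
    ∑ n ∈ Finset.range (N * P), (if a = n % P then f n else 0) =
      ∑ r ∈ Finset.range N, f (P * r + a) := by
  rw [← Finset.sum_filter]
  refine Finset.sum_nbij' (i := fun n => n / P) (j := fun r => P * r + a) ?_ ?_ ?_ ?_ ?_
  · intro n hn
    simp only [Finset.mem_filter, Finset.mem_range] at hn
    exact Finset.mem_range.mpr ((Nat.div_lt_iff_lt_mul hP).mpr hn.1)
  · intro r hr
    simp only [Finset.mem_range] at hr
    simp only [Finset.mem_filter, Finset.mem_range]
    constructor
    · calc P * r + a < P * r + P := by omega
        _ = P * (r + 1) := by ring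
        _ ≤ P * N := Nat.mul_le_mul_left P hr
        _ = N * P := mul_comm P N
    · rw [Nat.mul_add_mod, Nat.mod_eq_of_lt ha]
  · intro n hn
    simp only [Finset.mem_filter] at hn
    show P * (n / P) + a = n
    rw [hn.2, Nat.div_add_mod]
  · intro r hr
    show (P * r + a) / P = r
    rw [Nat.mul_add_div hP, Nat.div_eq_of_lt ha, add_zero]
  · intro n hn
    simp only [Finset.mem_filter] at hn
    show f n = f (P * (n / P) + a)
    rw [hn.2, Nat.div_add_mod]

lemma master (N T : ℕ) (hN : 2 ≤ N) (hT : 1 ≤ T)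
    (l : Fin N → ℕ) (hlinj : Function.Injective l) (hlP : ∀ t, l t < N + T)
    (gg : Fin N → ℕ) (τ : ℕ) :
    pcc (N*(N+T)) (iudft (N*(N+T)) (uhatG N (N+T) l gg))
        (iudft (N*(N+T)) (uhatG N (N+T) l gg)) τ
    = ((N+T:ℕ):ℂ)/N * (if (N:ℤ) ∣ (τ:ℤ) then (N:ℂ) else 0) *
        ∑ t : Fin N, EE (-((l t * τ : ℕ):ℝ)/((N*(N+T) : ℕ):ℝ)) := by
  set P := N + T with hPdef
  set L := N * P with hLdef
  have hNpos : 0 < N := by omega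
  have hPpos : 0 < P := by omega
  have hLpos : 0 < L := Nat.mul_pos hNpos hPpos
  have hNR : (N:ℝ) ≠ 0 := Nat.cast_ne_zero.mpr hNpos.ne'
  have hPR : (P:ℝ) ≠ 0 := Nat.cast_ne_zero.mpr hPpos.ne'
  rw [pcc_iudft L hLpos]
  have h1 : ∀ n ∈ Finset.range L,
      uhatG N P l gg n * (starRingEnd ℂ) (uhatG N P l gg n) * EE (-((n*τ:ℕ):ℝ)/L)
      = ∑ t : Fin N, (if l t = n % P then ((P:ℂ)/N) * EE (-((n*τ:ℕ):ℝ)/L) else 0) := by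
    intro n _
    rw [uhat_mul_conj N P hNpos hPpos l hlinj gg n, Finset.sum_mul]
    exact Finset.sum_congr rfl fun t _ => by rw [ite_mul, zero_mul]
  rw [Finset.sum_congr rfl h1, Finset.sum_comm]
  have h2 : ∀ t : Fin N,
      ∑ n ∈ Finset.range L, (if l t = n % P then ((P:ℂ)/N) * EE (-((n*τ:ℕ):ℝ)/L) else 0)
      = ∑ r ∈ Finset.range N, ((P:ℂ)/N) * (EE (-((r*τ:ℕ):ℝ)/N) * EE (-((l t*τ:ℕ):ℝ)/L)) := by
    intro t
    rw [hLdef, sum_mod N P hPpos (l t) (hlP t) (fun n => ((P:ℂ)/N) * EE (-((n*τ:ℕ):ℝ)/L))]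
    refine Finset.sum_congr rfl fun r _ => ?_
    congr 1
    rw [← EE_add]
    congr 1
    rw [hLdef]
    push_cast
    field_simp
    ring
  rw [Finset.sum_congr rfl (fun t _ => h2 t)]
  have h3 : ∀ t : Fin N,
      ∑ r ∈ Finset.range N, ((P:ℂ)/N) * (EE (-((r*τ:ℕ):ℝ)/N) * EE (-((l t*τ:ℕ):ℝ)/L))
      = ((P:ℂ)/N) * EE (-((l t*τ:ℕ):ℝ)/L) * (if (N:ℤ) ∣ (τ:ℤ) then (N:ℂ) else 0) := by
    intro t
    have horth := orth N hNpos (-(τ:ℤ))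
    have hsame : ∀ r ∈ Finset.range N, EE (-((r*τ:ℕ):ℝ)/N) = EE (((-(τ:ℤ) : ℤ):ℝ) * r / N) := by
      intro r _
      congr 1
      push_cast
      ring
    calc ∑ r ∈ Finset.range N, ((P:ℂ)/N) * (EE (-((r*τ:ℕ):ℝ)/N) * EE (-((l t*τ:ℕ):ℝ)/L))
        = ((P:ℂ)/N) * EE (-((l t*τ:ℕ):ℝ)/L) * ∑ r ∈ Finset.range N, EE (((-(τ:ℤ) : ℤ):ℝ) * r / N) := by
          rw [Finset.mul_sum]
          exact Finset.sum_congr rfl fun r hr => by rw [hsame r hr]; ring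
      _ = ((P:ℂ)/N) * EE (-((l t*τ:ℕ):ℝ)/L) * (if (N:ℤ) ∣ (τ:ℤ) then (N:ℂ) else 0) := by
          rw [horth]; simp only [dvd_neg]
  rw [Finset.sum_congr rfl (fun t _ => h3 t), Finset.mul_sum]
  exact Finset.sum_congr rfl fun t _ => by ring

/-- let `N ≥ 2`, `T ≥ 1`, `P = N+T`, `L = NP`, `I ⊆ Z_P` with `|I| = T`,
`Z_P \ I = {l_0 < … < l_{N-1}}`, and `g` a permutation of `Z_N`. The periodic
autocorrelation of the time-domain sequence `U` satisfies: `θ_U(0) = NP`;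
`|θ_U(τ)| = |P·Σ_{l ∉ I} ω_P^{l·b}|` for `τ = N·b`, `0 < τ < L`, `P ∤ b`;
and `θ_U(τ) = 0` for all other `0 < τ < L`. -/
theorem stmt14 (N T : ℕ) (hN : 2 ≤ N) (hT : 1 ≤ T)
    (I : Finset ℕ) (hIsub : I ⊆ Finset.range (N + T)) (hIcard : I.card = T)
    (l : Fin N → ℕ) (hlmono : StrictMono l) (hlP : ∀ t, l t < N + T)
    (hlI : ∀ s < N + T, (s ∉ I ↔ ∃ t, l t = s))
    (g : Equiv.Perm (ZMod N))
    (U : ℕ → ℂ)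
    (hU : ∀ t, U t =
      iudft (N * (N + T)) (uhatG N (N + T) l (fun t => (g ((t : ℕ) : ZMod N)).val)) t) :
    pcc (N * (N + T)) U U 0 = ((N * (N + T) : ℕ) : ℂ) ∧
    (∀ b : ℕ, 0 < N * b → N * b < N * (N + T) → ¬ (N + T) ∣ b →
      ‖pcc (N * (N + T)) U U (N * b)‖ =
        ‖(((N + T : ℕ)) : ℂ) * ∑ t : Fin N,
          Complex.exp (2 * (Real.pi : ℂ) * Complex.I *
            ((l t * b : ℕ) : ℂ) / (((N + T : ℕ)) : ℂ))‖) ∧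
    (∀ τ : ℕ, 0 < τ → τ < N * (N + T) → ¬ (∃ b : ℕ, τ = N * b ∧ ¬ (N + T) ∣ b) →
      pcc (N * (N + T)) U U τ = 0) := by
  have hNpos : 0 < N := by omega
  have hPpos : 0 < N + T := by omega
  have hNC : (N:ℂ) ≠ 0 := Nat.cast_ne_zero.mpr hNpos.ne'
  have hlinj : Function.Injective l := hlmono.injective
  set gg : Fin N → ℕ := fun t => (g ((t : ℕ) : ZMod N)).val with hgg
  have hpcc : ∀ τ : ℕ, pcc (N * (N + T)) U U τ =
      ((N+T:ℕ):ℂ)/N * (if (N:ℤ) ∣ (τ:ℤ) then (N:ℂ) else 0) *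
        ∑ t : Fin N, EE (-((l t * τ : ℕ):ℝ)/((N*(N+T) : ℕ):ℝ)) := by
    intro τ
    have hUU : pcc (N*(N+T)) U U τ =
        pcc (N*(N+T)) (iudft (N*(N+T)) (uhatG N (N+T) l gg))
          (iudft (N*(N+T)) (uhatG N (N+T) l gg)) τ := by
      unfold pcc
      exact Finset.sum_congr rfl fun t _ => by rw [hU, hU]
    rw [hUU, master N T hN hT l hlinj hlP gg τ]
  refine ⟨?_, ?_, ?_⟩
  · rw [hpcc 0, if_pos (show (N:ℤ) ∣ ((0:ℕ):ℤ) from by simp)]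
    have h0 : ∀ t : Fin N, EE (-((l t * 0 : ℕ):ℝ)/((N*(N+T) : ℕ):ℝ)) = 1 := by
      intro t
      rw [show (-((l t * 0 : ℕ):ℝ)/((N*(N+T) : ℕ):ℝ)) = 0 by push_cast; ring, EE_zero]
    rw [Finset.sum_congr rfl (fun t _ => h0 t), Finset.sum_const, Finset.card_univ,
      Fintype.card_fin, nsmul_eq_mul, mul_one]
    push_cast
    field_simp
  · intro b hb1 hb2 hb3
    rw [hpcc (N*b), if_pos ⟨(b:ℤ), by push_cast; ring⟩]
    have hsimp : ∀ t : Fin N, EE (-((l t * (N*b) : ℕ):ℝ)/((N*(N+T) : ℕ):ℝ))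
        = EE (-((l t * b : ℕ):ℝ)/((N+T:ℕ):ℝ)) := by
      intro t
      congr 1
      have hNR : (N:ℝ) ≠ 0 := Nat.cast_ne_zero.mpr hNpos.ne'
      have hPR : ((N+T:ℕ):ℝ) ≠ 0 := Nat.cast_ne_zero.mpr hPpos.ne'
      push_cast
      field_simp
    rw [Finset.sum_congr rfl (fun t _ => hsimp t)]
    have hPm : ((N+T:ℕ):ℂ)/(N:ℂ) * (N:ℂ) = ((N+T:ℕ):ℂ) := by field_simp
    rw [hPm]
    have hexp : ∀ t : Fin N,
        Complex.exp (2 * (Real.pi : ℂ) * Complex.I * ((l t * b : ℕ) : ℂ) / (((N + T : ℕ)) : ℂ))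
        = EE (((l t * b : ℕ):ℝ)/((N+T:ℕ):ℝ)) := by
      intro t
      rw [EE]
      congr 1
      push_cast
      ring
    rw [Finset.sum_congr rfl (fun t _ => hexp t)]
    have hconj : (starRingEnd ℂ) (((N+T:ℕ):ℂ) * ∑ t : Fin N, EE (((l t * b : ℕ):ℝ)/((N+T:ℕ):ℝ)))
        = ((N+T:ℕ):ℂ) * ∑ t : Fin N, EE (-((l t * b : ℕ):ℝ)/((N+T:ℕ):ℝ)) := by
      rw [map_mul, map_sum, map_natCast]
      congr 1
      exact Finset.sum_congr rfl fun t _ => by rw [conj_EE, neg_div]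
    rw [← hconj, RCLike.norm_conj]
  · intro τ hτ1 hτ2 hτ3
    have hnd : ¬ (N:ℤ) ∣ (τ:ℤ) := by
      rw [Int.natCast_dvd_natCast]
      rintro ⟨b, hb⟩
      apply hτ3
      refine ⟨b, hb, fun hPb => ?_⟩
      have hbpos : 0 < b := by
        rcases Nat.eq_zero_or_pos b with h | h
        · subst h
          simp at hb
          omega
        · exact h
      have hblt : b < N + T := by
        have := hτ2
        rw [hb] at this
        exact Nat.lt_of_mul_lt_mul_left this
      exact absurd (Nat.le_of_dvd hbpos hPb) (by omega)
    rw [hpcc τ, if_neg hnd]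
    ring

end Aux
end

section
/- Let N ≥ 2 and T ≥ 1, set P = N+T and L = NP, let I ⊆ Z_P with |I| = T, write Z_P \ I = {l_0 < … < l_{N-1}}, let π_0,…,π_{M-1} be the rows of an M×N circular Florentine rectangle over Z_N, and set g_{i,t} = π_i^{−1}(t). For each i define û^i_{Pr+l_t} = √(P/N)·ω_N^{r·g_{i,t}}·ω_{NP}^{l_t·g_{i,t}} and û^i_{Pr+s} = 0 for s ∈ I, and let U^i be the inverse unitary DFT of Û^i. Then for all 0 ≤ i ≠ j < M and all 0 ≤ τ < L, |θ_{U^i, U^j}(τ)| = P. -/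
/-- An `M × N` circular Florentine rectangle over `Z_N`. -/
def IsCFR (N M : ℕ) (σ : Fin M → Equiv.Perm (ZMod N)) : Prop :=
  ∀ m : ZMod N, m ≠ 0 → ∀ i j : Fin M, ∀ x y : ZMod N,
    σ i x = σ j y → σ i (x + m) = σ j (y + m) → i = j ∧ x = y

/- ======================= auxiliary lemmas ======================= -/

noncomputable def ee (L : ℕ) (k : ℤ) : ℂ := Complex.exp (2 * Real.pi * Complex.I * k / L)

lemma ee_add (L : ℕ) (a b : ℤ) : ee L (a + b) = ee L a * ee L b := by
  rw [ee, ee, ee, ← Complex.exp_add]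
  congr 1
  push_cast
  ring

lemma ee_conj (L : ℕ) (k : ℤ) : (starRingEnd ℂ) (ee L k) = ee L (-k) := by
  rw [ee, ee, ← Complex.exp_conj]
  congr 1
  simp only [map_div₀, map_mul, map_ofNat, Complex.conj_I, Complex.conj_ofReal,
    map_intCast, map_natCast]
  push_cast
  ring

lemma ee_mul_nat (L : ℕ) (hL : L ≠ 0) (m : ℤ) : ee L (L * m) = 1 := by
  have hL' : (L : ℂ) ≠ 0 := Nat.cast_ne_zero.mpr hL
  rw [ee, show (2 * (Real.pi:ℂ) * Complex.I * ((L : ℤ) * m : ℤ) / L) = m * (2 * Real.pi * Complex.I) by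
    rw [div_eq_iff hL']
    push_cast
    ring]
  exact Complex.exp_int_mul_two_pi_mul_I m

lemma ee_norm (L : ℕ) (k : ℤ) : ‖ee L k‖ = 1 := by
  rw [ee, show (2 * (Real.pi:ℂ) * Complex.I * k / L) = ((2 * Real.pi * k / L : ℝ) : ℂ) * Complex.I by
    push_cast; ring]
  rw [Complex.norm_exp_ofReal_mul_I]

lemma ee_pow (L : ℕ) (k : ℤ) (t : ℕ) : ee L (k * t) = (ee L k) ^ t := by
  rw [ee, ee, ← Complex.exp_nat_mul]
  congr 1
  push_cast
  ring

lemma ee_scale (N P : ℕ) (hN : N ≠ 0) (hP : P ≠ 0) (k : ℤ) :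
    ee (N * P) ((P : ℤ) * k) = ee N k := by
  rw [ee, ee]
  congr 1
  have hN' : (N : ℂ) ≠ 0 := Nat.cast_ne_zero.mpr hN
  have hP' : (P : ℂ) ≠ 0 := Nat.cast_ne_zero.mpr hP
  push_cast
  field_simp

lemma ee_sum (L : ℕ) (hL : 0 < L) (k : ℤ) :
    ∑ t ∈ Finset.range L, ee L (k * t) = if (L : ℤ) ∣ k then (L : ℂ) else 0 := by
  simp only [ee_pow]
  by_cases h : (L : ℤ) ∣ k
  · obtain ⟨m, hm⟩ := h
    rw [if_pos ⟨m, hm⟩, hm, ee_mul_nat L hL.ne' m]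
    simp
  · rw [if_neg h]
    have hne : ee L k ≠ 1 := by
      intro he
      rw [ee, Complex.exp_eq_one_iff] at he
      obtain ⟨n, hn⟩ := he
      apply h
      refine ⟨n, ?_⟩
      have hL' : (L : ℂ) ≠ 0 := Nat.cast_ne_zero.mpr hL.ne'
      have h2 : (2 * (Real.pi:ℂ) * Complex.I) ≠ 0 := by
        simpa [mul_comm] using Complex.two_pi_I_ne_zero
      field_simp at hn
      have : (k : ℂ) = L * n := by
        apply mul_left_cancel₀ h2
        linear_combination (2 * (Real.pi:ℂ) * Complex.I) * hn
      exact_mod_cast this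
    rw [geom_sum_eq hne]
    have : ee L k ^ L = 1 := by
      rw [← ee_pow, ee, show (2 * (Real.pi:ℂ) * Complex.I * ((k * L : ℤ) : ℂ) / L) = k * (2 * Real.pi * Complex.I) by
        have hL' : (L : ℂ) ≠ 0 := Nat.cast_ne_zero.mpr hL.ne'
        rw [div_eq_iff hL']
        push_cast
        ring]
      exact Complex.exp_int_mul_two_pi_mul_I k
    rw [this]
    simp

lemma iudft_ee (L : ℕ) (a : ℕ → ℂ) (t : ℕ) :
    iudft L a t = ((Real.sqrt L : ℝ) : ℂ)⁻¹ * ∑ n ∈ Finset.range L, a n * ee L ((n : ℤ) * t) := by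
  rw [iudft]
  congr 1
  refine Finset.sum_congr rfl fun n _ => ?_
  rw [ee]
  congr 1
  push_cast
  ring

lemma iudft_conj (L : ℕ) (a : ℕ → ℂ) (t : ℕ) :
    (starRingEnd ℂ) (iudft L a t)
      = ((Real.sqrt L : ℝ) : ℂ)⁻¹ *
          ∑ n ∈ Finset.range L, (starRingEnd ℂ) (a n) * ee L (-((n : ℤ) * t)) := by
  rw [iudft_ee, map_mul, map_sum]
  congr 1
  · rw [map_inv₀, Complex.conj_ofReal]
  · exact Finset.sum_congr rfl fun n _ => by rw [map_mul, ee_conj]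

lemma ee_mod (L : ℕ) (hL : L ≠ 0) (m s : ℕ) :
    ee L (-((m : ℤ) * ((s % L : ℕ) : ℤ))) = ee L (-((m : ℤ) * (s : ℤ))) := by
  conv_rhs => rw [show (s : ℤ) = ((s % L : ℕ) : ℤ) + (L : ℤ) * ((s / L : ℕ) : ℤ) by
    exact_mod_cast congrArg (Nat.cast : ℕ → ℤ) (Nat.mod_add_div s L).symm]
  rw [show -((m : ℤ) * (((s % L : ℕ) : ℤ) + (L : ℤ) * ((s / L : ℕ) : ℤ)))
      = -((m : ℤ) * ((s % L : ℕ) : ℤ)) + (L : ℤ) * (-((m : ℤ) * ((s / L : ℕ) : ℤ))) by ring,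
    ee_add, ee_mul_nat L hL, mul_one]

lemma pcc_spec (L : ℕ) (hL : 0 < L) (a b : ℕ → ℂ) (τ : ℕ) :
    pcc L (iudft L a) (iudft L b) τ
      = ∑ n ∈ Finset.range L, a n * (starRingEnd ℂ) (b n) * ee L (-((n : ℤ) * τ)) := by
  have hLne : (L : ℂ) ≠ 0 := Nat.cast_ne_zero.mpr hL.ne'
  have hc : ((Real.sqrt L : ℝ) : ℂ) * ((Real.sqrt L : ℝ) : ℂ) = (L : ℂ) := by
    rw [← Complex.ofReal_mul, Real.mul_self_sqrt (Nat.cast_nonneg L)]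
    norm_num
  set c : ℂ := ((Real.sqrt L : ℝ) : ℂ)⁻¹ with hcdef
  have hscale : c * c * (L : ℂ) = 1 := by
    rw [hcdef, ← mul_inv, hc, inv_mul_cancel₀ hLne]
  have step1 : pcc L (iudft L a) (iudft L b) τ
      = ∑ t ∈ Finset.range L, ∑ n ∈ Finset.range L, ∑ m ∈ Finset.range L,
          c * c * (a n * (starRingEnd ℂ) (b m) * ee L (-((m : ℤ) * τ)) *
            ee L (((n : ℤ) - m) * t)) := by
    rw [pcc]
    refine Finset.sum_congr rfl fun t _ => ?_
    rw [iudft_ee, iudft_conj, mul_mul_mul_comm, Finset.sum_mul_sum, Finset.mul_sum]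
    refine Finset.sum_congr rfl fun n _ => ?_
    rw [Finset.mul_sum]
    refine Finset.sum_congr rfl fun m _ => ?_
    rw [ee_mod L hL.ne' m (t + τ)]
    have key : ee L ((n : ℤ) * t) * ee L (-((m : ℤ) * ((t + τ : ℕ) : ℤ)))
        = ee L (-((m : ℤ) * τ)) * ee L (((n : ℤ) - m) * t) := by
      rw [← ee_add, ← ee_add]
      congr 1
      push_cast
      ring
    linear_combination (c * c * (a n * (starRingEnd ℂ) (b m))) * key
  rw [step1, Finset.sum_comm]
  refine Finset.sum_congr rfl fun n hn => ?_
  rw [Finset.sum_comm]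
  have step2 : ∀ m ∈ Finset.range L,
      (∑ t ∈ Finset.range L, c * c * (a n * (starRingEnd ℂ) (b m) * ee L (-((m : ℤ) * τ)) *
        ee L (((n : ℤ) - m) * t)))
      = if n = m then c * c * (a n * (starRingEnd ℂ) (b m) * ee L (-((m : ℤ) * τ))) * L else 0 := by
    intro m hm
    rw [show (∑ t ∈ Finset.range L, c * c * (a n * (starRingEnd ℂ) (b m) * ee L (-((m : ℤ) * τ)) *
          ee L (((n : ℤ) - m) * t)))
        = (c * c * (a n * (starRingEnd ℂ) (b m) * ee L (-((m : ℤ) * τ)))) *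
            ∑ t ∈ Finset.range L, ee L (((n : ℤ) - m) * t) by
      rw [Finset.mul_sum]
      exact Finset.sum_congr rfl fun t _ => by ring]
    rw [ee_sum L hL]
    by_cases h : n = m
    · subst h
      rw [if_pos rfl, if_pos (by simp)]
    · rw [if_neg h, if_neg, mul_zero]
      intro hd
      have h1 : (n : ℤ) < L := by exact_mod_cast Finset.mem_range.mp hn
      have h2 : (m : ℤ) < L := by exact_mod_cast Finset.mem_range.mp hm
      have h0 : ((n : ℤ) - m) = 0 := Int.eq_zero_of_abs_lt_dvd hd (by
        rw [abs_lt]; omega)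
      exact h (by omega)
  rw [Finset.sum_congr rfl step2, Finset.sum_ite_eq, if_pos hn]
  linear_combination (a n * (starRingEnd ℂ) (b n) * ee L (-((n : ℤ) * τ))) * hscale

lemma uhatG_zero (N P : ℕ) (l g : Fin N → ℕ) (n : ℕ) (h : ∀ t, l t ≠ n % P) :
    uhatG N P l g n = 0 := by
  rw [uhatG]
  exact Finset.sum_eq_zero fun t _ => if_neg (h t)

lemma uhatG_eval (N P : ℕ) (hP : 0 < P) (l g : Fin N → ℕ) (hl : Function.Injective l)
    (hlP : ∀ t, l t < P) (r : ℕ) (t0 : Fin N) :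
    uhatG N P l g (P * r + l t0)
      = ((Real.sqrt ((P : ℝ) / (N : ℝ))) : ℂ) * ee N ((r : ℤ) * g t0) *
          ee (N * P) ((l t0 : ℤ) * g t0) := by
  have hmod : (P * r + l t0) % P = l t0 := by
    rw [Nat.mul_add_mod, Nat.mod_eq_of_lt (hlP t0)]
  have hdiv : (P * r + l t0) / P = r := by
    rw [Nat.mul_add_div hP, Nat.div_eq_of_lt (hlP t0), add_zero]
  have e1 : Complex.exp (2 * (Real.pi : ℂ) * Complex.I * ((r * g t0 : ℕ) : ℂ) / (N : ℂ))
      = ee N ((r : ℤ) * g t0) := by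
    (rw [ee]; congr 1) <;> (push_cast; ring)
  have e2 : Complex.exp (2 * (Real.pi : ℂ) * Complex.I * ((l t0 * g t0 : ℕ) : ℂ) / ((N * P : ℕ) : ℂ))
      = ee (N * P) ((l t0 : ℤ) * g t0) := by
    (rw [ee]; congr 1) <;> (push_cast; ring)
  rw [uhatG, Finset.sum_eq_single t0]
  · rw [if_pos hmod.symm, hdiv, e1, e2]
  · intro t _ ht
    rw [hmod, if_neg fun he => ht (hl he)]
  · intro h
    exact absurd (Finset.mem_univ t0) h

lemma sum_range_mul_split (N P : ℕ) (f : ℕ → ℂ) :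
    ∑ n ∈ Finset.range (N * P), f n
      = ∑ r ∈ Finset.range N, ∑ s ∈ Finset.range P, f (P * r + s) := by
  rcases Nat.eq_zero_or_pos P with hP | hP
  · subst hP; simp
  rw [← Finset.sum_product']
  refine Finset.sum_nbij' (fun n => (n / P, n % P)) (fun p => P * p.1 + p.2) ?_ ?_ ?_ ?_ ?_
  · intro n hn
    rw [Finset.mem_range] at hn
    refine Finset.mem_product.mpr ⟨Finset.mem_range.mpr ?_, Finset.mem_range.mpr (Nat.mod_lt _ hP)⟩
    exact (Nat.div_lt_iff_lt_mul hP).mpr hn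
  · intro p hp
    rw [Finset.mem_product, Finset.mem_range, Finset.mem_range] at hp
    rw [Finset.mem_range]
    calc P * p.1 + p.2 < P * (p.1 + 1) := by rw [Nat.mul_add, Nat.mul_one]; omega
    _ ≤ P * N := Nat.mul_le_mul_left P hp.1
    _ = N * P := Nat.mul_comm P N
  · intro n _
    exact Nat.div_add_mod n P
  · intro p hp
    rw [Finset.mem_product, Finset.mem_range, Finset.mem_range] at hp
    ext
    · simp [Nat.mul_add_div hP, Nat.div_eq_of_lt hp.2]
    · simp [Nat.mul_add_mod, Nat.mod_eq_of_lt hp.2]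
  · intro n _
    simp only []
    rw [Nat.div_add_mod]

/- ======================= main theorem ======================= -/

/-- in the setting of Construction 3 built from the rows
`σ 0, …, σ (M−1)` of an `M × N` CFR over `Z_N` (with `g_{i,t} = σ_i⁻¹(t)`), for all
`i ≠ j` and all `0 ≤ τ < L`, the periodic cross-correlation of the time-domain
sequences satisfies `|θ_{U^i,U^j}(τ)| = P`. -/
theorem stmt17 (N T M : ℕ) (hN : 2 ≤ N) (hT : 1 ≤ T)
    (I : Finset ℕ) (hIsub : I ⊆ Finset.range (N + T)) (hIcard : I.card = T)
    (l : Fin N → ℕ) (hlmono : StrictMono l) (hlP : ∀ t, l t < N + T)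
    (hlI : ∀ s < N + T, (s ∉ I ↔ ∃ t, l t = s))
    (σ : Fin M → Equiv.Perm (ZMod N)) (hCFR : IsCFR N M σ)
    (U : Fin M → ℕ → ℂ)
    (hU : ∀ (i : Fin M) (t : ℕ), U i t =
      iudft (N * (N + T))
        (uhatG N (N + T) l (fun t => ((σ i).symm ((t : ℕ) : ZMod N)).val)) t)
    (i j : Fin M) (hij : i ≠ j) (τ : ℕ) (hτ : τ < N * (N + T)) :
    ‖pcc (N * (N + T)) (U i) (U j) τ‖ = ((N + T : ℕ) : ℝ) := by
  haveI : NeZero N := ⟨by omega⟩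
  set P := N + T with hPdef
  have hP0 : 0 < P := by omega
  have hN0 : 0 < N := by omega
  have hL0 : 0 < N * P := Nat.mul_pos hN0 hP0
  set gi : Fin N → ℕ := fun t => ((σ i).symm ((t : ℕ) : ZMod N)).val with hgi
  set gj : Fin N → ℕ := fun t => ((σ j).symm ((t : ℕ) : ZMod N)).val with hgj
  have hlinj : Function.Injective l := hlmono.injective
  set D : Fin N → ℤ := fun t => (gi t : ℤ) - gj t - τ with hD
  -- CFR gives injectivity of the difference map
  have hinj : Function.Injective (fun a : ZMod N => (σ i).symm a - (σ j).symm a) := by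
    intro a b hab
    simp only at hab
    by_contra hne
    set x := (σ i).symm a with hx
    set y := (σ j).symm a with hy
    set m := (σ i).symm b - (σ i).symm a with hm
    have hm0 : m ≠ 0 := by
      intro h0
      apply hne
      have hba : (σ i).symm b = (σ i).symm a := by
        have := sub_eq_zero.mp h0
        exact this
      exact ((σ i).symm.injective hba).symm
    have h1 : σ i x = σ j y := by
      rw [hx, hy, Equiv.apply_symm_apply, Equiv.apply_symm_apply]
    have h2 : σ i (x + m) = σ j (y + m) := by
      have hxm : x + m = (σ i).symm b := by rw [hx, hm]; ring
      have hym : y + m = (σ j).symm b := by rw [hy, hm]; linear_combination -hab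
      rw [hxm, hym, Equiv.apply_symm_apply, Equiv.apply_symm_apply]
    obtain ⟨hij', -⟩ := hCFR m hm0 i j x y h1 h2
    exact hij hij'
  have hsurj : Function.Surjective (fun a : ZMod N => (σ i).symm a - (σ j).symm a) :=
    Finite.injective_iff_surjective.mp hinj
  obtain ⟨a, ha⟩ := hsurj ((τ : ℕ) : ZMod N)
  set t₀ : Fin N := ⟨a.val, ZMod.val_lt a⟩ with ht₀def
  have hct₀ : (((t₀ : ℕ) : ZMod N)) = a := by
    rw [ht₀def]
    exact ZMod.natCast_rightInverse a
  have hc_inj : ∀ t t' : Fin N, ((t : ℕ) : ZMod N) = ((t' : ℕ) : ZMod N) → t = t' := by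
    intro t t' h
    have := congrArg ZMod.val h
    rw [ZMod.val_cast_of_lt t.isLt, ZMod.val_cast_of_lt t'.isLt] at this
    exact Fin.ext this
  have hdvd_iff : ∀ t : Fin N, ((N : ℤ) ∣ D t) ↔
      (σ i).symm ((t : ℕ) : ZMod N) - (σ j).symm ((t : ℕ) : ZMod N) = ((τ : ℕ) : ZMod N) := by
    intro t
    rw [← ZMod.intCast_zmod_eq_zero_iff_dvd]
    simp only [hD, hgi, hgj]
    push_cast
    simp only [ZMod.natCast_val, ZMod.intCast_cast, ZMod.cast_id]
    constructor
    · intro h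
      linear_combination h
    · intro h
      linear_combination h
  have ht₀dvd : (N : ℤ) ∣ D t₀ := (hdvd_iff t₀).mpr (by rw [hct₀]; exact ha)
  have huniq : ∀ t : Fin N, t ≠ t₀ → ¬ ((N : ℤ) ∣ D t) := by
    intro t ht hd
    apply ht
    apply hc_inj
    rw [hct₀]
    apply hinj
    simp only
    rw [(hdvd_iff t).mp hd]
    exact ha.symm
  -- evaluate the correlation
  have hval : pcc (N * P) (U i) (U j) τ
      = (((P : ℝ) / (N : ℝ) : ℝ) : ℂ) * ee (N * P) ((l t₀ : ℤ) * D t₀) * (N : ℂ) := by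
    calc pcc (N * P) (U i) (U j) τ
        = pcc (N * P) (iudft (N * P) (uhatG N P l gi)) (iudft (N * P) (uhatG N P l gj)) τ := by
          rw [pcc, pcc]
          refine Finset.sum_congr rfl fun t _ => ?_
          rw [hU i t, hU j ((t + τ) % (N * P))]
      _ = ∑ n ∈ Finset.range (N * P), uhatG N P l gi n * (starRingEnd ℂ) (uhatG N P l gj n) *
            ee (N * P) (-((n : ℤ) * τ)) := pcc_spec (N * P) hL0 _ _ τ
      _ = ∑ r ∈ Finset.range N, ∑ s ∈ Finset.range P,
            (uhatG N P l gi (P * r + s) * (starRingEnd ℂ) (uhatG N P l gj (P * r + s)) *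
              ee (N * P) (-(((P * r + s : ℕ) : ℤ) * τ))) :=
          sum_range_mul_split N P _
      _ = ∑ r ∈ Finset.range N, ∑ t : Fin N,
            (uhatG N P l gi (P * r + l t) * (starRingEnd ℂ) (uhatG N P l gj (P * r + l t)) *
              ee (N * P) (-(((P * r + l t : ℕ) : ℤ) * τ))) := by
          refine Finset.sum_congr rfl fun r _ => ?_
          rw [show (∑ t : Fin N,
              (uhatG N P l gi (P * r + l t) * (starRingEnd ℂ) (uhatG N P l gj (P * r + l t)) *
                ee (N * P) (-(((P * r + l t : ℕ) : ℤ) * τ))))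
            = ∑ s ∈ Finset.image l Finset.univ,
              (uhatG N P l gi (P * r + s) * (starRingEnd ℂ) (uhatG N P l gj (P * r + s)) *
                ee (N * P) (-(((P * r + s : ℕ) : ℤ) * τ))) from
            (Finset.sum_image (f := fun s =>
              (uhatG N P l gi (P * r + s) * (starRingEnd ℂ) (uhatG N P l gj (P * r + s)) *
                ee (N * P) (-(((P * r + s : ℕ) : ℤ) * τ))))
              (fun x _ y _ h => hlinj h)).symm]
          refine (Finset.sum_subset ?_ ?_).symm
          · intro s hs
            obtain ⟨t, -, ht⟩ := Finset.mem_image.mp hs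
            exact Finset.mem_range.mpr (ht ▸ hlP t)
          · intro s hs hsnot
            have hmod : (P * r + s) % P = s := by
              rw [Nat.mul_add_mod, Nat.mod_eq_of_lt (Finset.mem_range.mp hs)]
            have hz : uhatG N P l gi (P * r + s) = 0 := by
              apply uhatG_zero
              intro t he
              rw [hmod] at he
              exact hsnot (Finset.mem_image.mpr ⟨t, Finset.mem_univ t, he⟩)
            rw [hz, zero_mul, zero_mul]
      _ = ∑ r ∈ Finset.range N, ∑ t : Fin N,
            (((P : ℝ) / (N : ℝ) : ℝ) : ℂ) * ee (N * P) ((l t : ℤ) * D t) * ee N (D t * r) := by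
          refine Finset.sum_congr rfl fun r _ => Finset.sum_congr rfl fun t _ => ?_
          rw [uhatG_eval N P hP0 l gi hlinj hlP r t, uhatG_eval N P hP0 l gj hlinj hlP r t]
          rw [map_mul, map_mul, Complex.conj_ofReal, ee_conj, ee_conj]
          have hτsplit : ee (N * P) (-(((P * r + l t : ℕ) : ℤ) * τ))
              = ee N (-((r : ℤ) * τ)) * ee (N * P) (-((l t : ℤ) * τ)) := by
            rw [show (-(((P * r + l t : ℕ) : ℤ) * τ))
                = (P : ℤ) * (-((r : ℤ) * τ)) + (-((l t : ℤ) * τ)) by push_cast; ring,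
              ee_add, ee_scale N P hN0.ne' hP0.ne']
          have c1 : ee N ((r : ℤ) * gi t) * ee N (-((r : ℤ) * gj t)) * ee N (-((r : ℤ) * τ))
              = ee N (D t * r) := by
            rw [← ee_add, ← ee_add]
            congr 1
            simp only [hD]
            ring
          have c2 : ee (N * P) ((l t : ℤ) * gi t) * ee (N * P) (-((l t : ℤ) * gj t)) *
                ee (N * P) (-((l t : ℤ) * τ)) = ee (N * P) ((l t : ℤ) * D t) := by
            rw [← ee_add, ← ee_add]
            congr 1
            simp only [hD]
            ring
          have hA : ((Real.sqrt ((P : ℝ) / (N : ℝ)) : ℝ) : ℂ) *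
                ((Real.sqrt ((P : ℝ) / (N : ℝ)) : ℝ) : ℂ) = (((P : ℝ) / (N : ℝ) : ℝ) : ℂ) := by
            rw [← Complex.ofReal_mul,
              Real.mul_self_sqrt (div_nonneg (Nat.cast_nonneg P) (Nat.cast_nonneg N))]
          rw [hτsplit, ← c1, ← c2, ← hA]
          ring
      _ = ∑ t : Fin N, (((P : ℝ) / (N : ℝ) : ℝ) : ℂ) * ee (N * P) ((l t : ℤ) * D t) *
            (if (N : ℤ) ∣ D t then (N : ℂ) else 0) := by
          rw [Finset.sum_comm]
          refine Finset.sum_congr rfl fun t _ => ?_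
          rw [show (∑ r ∈ Finset.range N,
              (((P : ℝ) / (N : ℝ) : ℝ) : ℂ) * ee (N * P) ((l t : ℤ) * D t) * ee N (D t * r))
            = ((((P : ℝ) / (N : ℝ) : ℝ) : ℂ) * ee (N * P) ((l t : ℤ) * D t)) *
                ∑ r ∈ Finset.range N, ee N (D t * r) from by
            rw [Finset.mul_sum]]
          rw [ee_sum N hN0]
      _ = (((P : ℝ) / (N : ℝ) : ℝ) : ℂ) * ee (N * P) ((l t₀ : ℤ) * D t₀) * (N : ℂ) := by
          rw [Finset.sum_eq_single t₀]
          · rw [if_pos ht₀dvd]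
          · intro t _ ht
            rw [if_neg (huniq t ht), mul_zero]
          · intro h
            exact absurd (Finset.mem_univ t₀) h
  rw [hval, norm_mul, norm_mul, Complex.norm_real, Real.norm_eq_abs,
    abs_of_nonneg (div_nonneg (Nat.cast_nonneg P) (Nat.cast_nonneg N)),
    ee_norm, mul_one, Complex.norm_natCast]
  rw [div_mul_cancel₀]
  exact Nat.cast_ne_zero.mpr hN0.ne'
end
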